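/- arXiv:1304.0514 — 5 statements merged into one kernel-verified Lean document; each statement's English description precedes it below -/
import Mathlib

section
/- For any positive integers m, x, y, z, if (4m²−1)^x + (4m)^y = (4m²+1)^z, then (x,y,z) = (2,2,2). -/
lemma binomS (n k : ℤ) (h : n ∣ k^2) : ∀ t : ℕ, (1+k)^t ≡ 1 + k*t [ZMOD n] := by
  intro t; induction t with
  | zero => simp
  | succ t ih =>
    calc (1+k)^(t+1) = (1+k)^t * (1+k) := pow_succ _ _
      _ ≡ (1+k*t)*(1+k) [ZMOD n] := ih.mul_right _
      _ = 1 + k*(t+1) + t*k^2 := by push_cast; ring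
      _ ≡ 1 + k*(t+1) + 0 [ZMOD n] :=
          Int.ModEq.add_left _ ((Int.modEq_zero_iff_dvd).mpr (h.mul_left t))
      _ = 1 + k*(t+1) := by ring

lemma geomS (a : ℤ) (ha : Odd a) : ∀ t : ℕ, ∃ S : ℤ, a^(2*t+1) + 1 = (a+1)*S ∧ Odd S := by
  intro t; induction t with
  | zero => exact ⟨1, by ring, odd_one⟩
  | succ t ih =>
    obtain ⟨S, h1, h2⟩ := ih
    refine ⟨a^2*S - a + 1, ?_, ?_⟩
    · have he : 2*(t+1)+1 = (2*t+1) + 2 := by ring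
      rw [he, pow_add]
      linear_combination a^2 * h1
    · have h3 : Odd (a^2*S) := (ha.pow).mul h2
      have h4 : Even (a - 1) := ha.sub_odd odd_one
      have h5 : a^2*S - a + 1 = a^2*S - (a - 1) := by ring
      rw [h5]; exact h3.sub_even h4

set_option maxHeartbeats 1000000 in
theorem stmt0 (m x y z : ℕ) (hm : 0 < m) (hx : 0 < x) (hy : 0 < y) (hz : 0 < z)
    (h : (4 * m ^ 2 - 1) ^ x + (4 * m) ^ y = (4 * m ^ 2 + 1) ^ z) :
    x = 2 ∧ y = 2 ∧ z = 2 := by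
  have hm4 : (1:ℕ) ≤ 4*m^2 := by nlinarith
  set a : ℤ := 4*(m:ℤ)^2 - 1 with ha
  set c : ℤ := 4*(m:ℤ)^2 + 1 with hc
  have hZ : a ^ x + (4*(m:ℤ)) ^ y = c ^ z := by
    have h' := congrArg (fun n : ℕ => (n:ℤ)) h
    simp only [Nat.cast_add, Nat.cast_pow, Nat.cast_mul, Nat.cast_sub hm4, Nat.cast_ofNat,
      Nat.cast_one] at h'
    push_cast at h'
    convert h' using 2 <;> push_cast <;> ring
  -- Step 1: x even
  have h4 : (-1 : ZMod 4)^x = 1 := by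
    have h' := congrArg (fun t : ℤ => (t : ZMod 4)) hZ
    push_cast [ha, hc] at h'
    have h40 : (4 : ZMod 4) = 0 := by decide
    rw [h40] at h'
    simpa [zero_pow hy.ne'] using h'
  have hxe : Even x := by
    by_contra hodd
    rw [Nat.not_even_iff_odd] at hodd
    rw [hodd.neg_one_pow] at h4
    exact absurd h4 (by decide)
  obtain ⟨X, hX⟩ := hxe
  replace hX : x = 2*X := by omega
  -- general congruence helper
  have key : ∀ q : ℤ, q ∣ 4*(m:ℤ)^2 → a ≡ -1 [ZMOD q] ∧ c ≡ 1 [ZMOD q] := by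
    intro q hq
    constructor
    · rw [Int.modEq_iff_dvd]
      have : (-1 : ℤ) - a = -(4*(m:ℤ)^2) := by rw [ha]; ring
      rw [this]; exact hq.neg_right
    · rw [Int.modEq_iff_dvd]
      have : (1 : ℤ) - c = -(4*(m:ℤ)^2) := by rw [hc]; ring
      rw [this]; exact hq.neg_right
  -- Step 2 : y ≥ 2
  have hy2 : 2 ≤ y := by
    by_contra hlt
    have hy1 : y = 1 := by omega
    obtain ⟨hA, hC⟩ := key (4*(m:ℤ)^2) dvd_rfl
    have hax : a^x ≡ 1 [ZMOD 4*(m:ℤ)^2] := by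
      have := hA.pow x
      calc a^x ≡ (-1)^x [ZMOD 4*(m:ℤ)^2] := this
        _ = 1 := by rw [hX, pow_mul]; norm_num
    have hcz : c^z ≡ 1 [ZMOD 4*(m:ℤ)^2] := by simpa using hC.pow z
    have hb0 : (4*(m:ℤ))^y ≡ 0 [ZMOD 4*(m:ℤ)^2] := by
      have h1 : (4*(m:ℤ))^y = c^z - a^x := by linarith [hZ]
      calc (4*(m:ℤ))^y = c^z - a^x := h1
        _ ≡ 1 - 1 [ZMOD 4*(m:ℤ)^2] := hcz.sub hax
        _ = 0 := by ring
    rw [hy1, pow_one, Int.modEq_zero_iff_dvd] at hb0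
    have hdn : (4*m^2 : ℕ) ∣ 4*m := by exact_mod_cast hb0
    have hm1 : m = 1 := by
      have := Nat.le_of_dvd (by omega) hdn
      nlinarith
    subst hm1; subst hy1
    norm_num at h
    -- h : 3^x + 4 = 5^z
    have hzodd : ¬ Even z := by
      intro hze
      obtain ⟨Z', hZ'⟩ := hze
      have h8 := congrArg (fun n : ℕ => (n : ZMod 8)) h
      push_cast at h8
      rw [hX, pow_mul] at h8
      have e1 : ((3:ZMod 8))^2 = 1 := by decide
      rw [e1, one_pow] at h8
      have hZ2 : z = 2*Z' := by omega
      rw [hZ2, pow_mul] at h8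
      have e2 : ((5:ZMod 8))^2 = 1 := by decide
      rw [e2, one_pow] at h8
      exact absurd h8 (by decide)
    rw [Nat.not_even_iff_odd] at hzodd
    have h3 := congrArg (fun n : ℕ => (n : ZMod 3)) h
    push_cast at h3
    have e3 : (3 : ZMod 3) = 0 := by decide
    rw [e3, zero_pow hx.ne'] at h3
    have e4 : ((5:ZMod 3))^z = 2 := by
      have : (5 : ZMod 3) = -1 := by decide
      rw [this, hzodd.neg_one_pow]; decide
    rw [e4] at h3
    exact absurd h3 (by decide)
  -- Step 3 : z even
  have hb16 : (16*(m:ℤ)^2) ∣ (4*(m:ℤ))^y := by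
    have h1 : (4*(m:ℤ))^y = (4*m)^2 * (4*m)^(y-2) := by
      rw [← pow_add]; congr 1; omega
    rw [h1]
    exact Dvd.dvd.mul_right ⟨1, by ring⟩ _
  have hax16 : a^x ≡ 1 + 8*(m:ℤ)^2*X [ZMOD 16*(m:ℤ)^2] := by
    have h1 : a^2 ≡ 1 + 8*(m:ℤ)^2 [ZMOD 16*(m:ℤ)^2] := by
      rw [Int.modEq_iff_dvd]
      refine ⟨1 - m^2, ?_⟩
      rw [ha]; ring
    calc a^x = (a^2)^X := by rw [hX, pow_mul]
      _ ≡ (1 + 8*(m:ℤ)^2)^X [ZMOD 16*(m:ℤ)^2] := h1.pow X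
      _ ≡ 1 + 8*(m:ℤ)^2*X [ZMOD 16*(m:ℤ)^2] := binomS _ _ ⟨4*m^2, by ring⟩ X
  have hcz16 : c^z ≡ 1 + 4*(m:ℤ)^2*z [ZMOD 16*(m:ℤ)^2] := by
    have := binomS (16*(m:ℤ)^2) (4*(m:ℤ)^2) ⟨m^2, by ring⟩ z
    calc c^z = (1 + 4*(m:ℤ)^2)^z := by rw [hc]; ring_nf
      _ ≡ 1 + 4*(m:ℤ)^2*z [ZMOD 16*(m:ℤ)^2] := this
  have hcomb : (1 + 8*(m:ℤ)^2*X) ≡ 1 + 4*(m:ℤ)^2*z [ZMOD 16*(m:ℤ)^2] := by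
    calc (1 + 8*(m:ℤ)^2*X) ≡ a^x + 0 [ZMOD 16*(m:ℤ)^2] := by
          simpa using hax16.symm
      _ ≡ a^x + (4*(m:ℤ))^y [ZMOD 16*(m:ℤ)^2] :=
          Int.ModEq.add_left _ ((Int.modEq_zero_iff_dvd.mpr hb16).symm)
      _ = c^z := hZ
      _ ≡ 1 + 4*(m:ℤ)^2*z [ZMOD 16*(m:ℤ)^2] := hcz16
  have hzdvd : (4:ℤ) ∣ ((z:ℤ) - 2*X) := by
    rw [Int.modEq_iff_dvd] at hcomb
    have h1 : (1 + 4*(m:ℤ)^2*z) - (1 + 8*(m:ℤ)^2*X) = (4*(m:ℤ)^2) * ((z:ℤ) - 2*X) := by ring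
    rw [h1] at hcomb
    have h2 : (16*(m:ℤ)^2) = (4*(m:ℤ)^2) * 4 := by ring
    rw [h2] at hcomb
    have hm0 : (4*(m:ℤ)^2) ≠ 0 := by positivity
    exact (mul_dvd_mul_iff_left hm0).mp hcomb
  obtain ⟨Z, hZ2⟩ : ∃ Z, z = 2*Z := by
    obtain ⟨k, hk⟩ := hzdvd
    exact ⟨z/2, by omega⟩
  -- Step 4 setup
  have hm1 : (1:ℤ) ≤ (m:ℤ) := by exact_mod_cast hm
  have ha3 : (3:ℤ) ≤ a := by rw [ha]; nlinarith
  have hc5 : (5:ℤ) ≤ c := by rw [hc]; nlinarith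
  have hXpos : 0 < X := by omega
  have hZpos : 0 < Z := by omega
  set U : ℤ := c^Z - a^X with hU
  set V : ℤ := c^Z + a^X with hV
  have hUV : U * V = (4*(m:ℤ))^y := by
    have h1 : U * V = (c^Z)^2 - (a^X)^2 := by rw [hU, hV]; ring
    rw [h1, ← pow_mul, ← pow_mul, mul_comm Z 2, mul_comm X 2, ← hZ2, ← hX]
    linarith [hZ]
  have haXpos : 0 < a^X := pow_pos (by linarith) X
  have hcZpos : 0 < c^Z := pow_pos (by linarith) Z
  have hVpos : 0 < V := by rw [hV]; linarith
  have hUpos : 0 < U := by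
    by_contra hle
    push_neg at hle
    have h1 : U * V ≤ 0 := mul_nonpos_of_nonpos_of_nonneg hle hVpos.le
    rw [hUV] at h1
    have h2 : (0:ℤ) < (4*(m:ℤ))^y := pow_pos (by linarith) y
    linarith
  have hcop : ∀ p : ℕ, p.Prime → p ≠ 2 → (p:ℤ) ∣ U → (p:ℤ) ∣ V → False := by
    intro p hp hp2 h1 h2
    have hpZ : Prime (p:ℤ) := Nat.prime_iff_prime_int.mp hp
    have hnp2 : ¬ (p:ℤ) ∣ 2 := by
      intro hd
      have hd' : (p:ℕ) ∣ 2 := by exact_mod_cast hd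
      have := Nat.le_of_dvd (by norm_num) hd'
      have := hp.two_le
      omega
    have hcd : (p:ℤ) ∣ 2*c^Z := by
      have h3 := dvd_add h1 h2
      have h4 : U + V = 2*c^Z := by rw [hU, hV]; ring
      rwa [h4] at h3
    have had : (p:ℤ) ∣ 2*a^X := by
      have h3 := dvd_sub h2 h1
      have h4 : V - U = 2*a^X := by rw [hU, hV]; ring
      rwa [h4] at h3
    have hc' : (p:ℤ) ∣ c := hpZ.dvd_of_dvd_pow ((hpZ.dvd_mul.mp hcd).resolve_left hnp2)
    have ha' : (p:ℤ) ∣ a := hpZ.dvd_of_dvd_pow ((hpZ.dvd_mul.mp had).resolve_left hnp2)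
    have h5 : (p:ℤ) ∣ 2 := by
      have h6 := dvd_sub hc' ha'
      have h7 : c - a = 2 := by rw [ha, hc]; ring
      rwa [h7] at h6
    exact hnp2 h5
  have killer : ∀ T T' : ℤ, 0 < T → T * T' = (4*(m:ℤ))^y →
      (∀ p : ℕ, p.Prime → p ≠ 2 → (p:ℤ) ∣ T → (p:ℤ) ∣ T' → False) →
      T ≡ 2 [ZMOD 4] →
      (∀ p : ℕ, p.Prime → p ≠ 2 → (p:ℤ) ∣ (m:ℤ) → T ≡ 2 [ZMOD (p:ℤ)^2]) →
      T = 2 := by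
    intro T T' hTpos hprod hcp hmod4 hmodp
    obtain ⟨k, hk⟩ : (4:ℤ) ∣ 2 - T := Int.modEq_iff_dvd.mp hmod4
    set W : ℤ := 1 - 2*k with hWdef
    have hTW : T = 2*W := by rw [hWdef]; linarith
    have hWpos : 0 < W := by linarith
    have hW1 : W = 1 := by
      have h1 : W.toNat = 1 := by
        rw [Nat.eq_one_iff_not_exists_prime_dvd]
        intro p hp hpd
        have hpW : (p:ℤ) ∣ W := by
          have h2 := Int.natCast_dvd_natCast.mpr hpd
          rwa [Int.toNat_of_nonneg hWpos.le] at h2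
        by_cases hp2 : p = 2
        · subst hp2
          obtain ⟨j, hj⟩ := hpW
          omega
        · have hpZ : Prime (p:ℤ) := Nat.prime_iff_prime_int.mp hp
          have hpT : (p:ℤ) ∣ T := by rw [hTW]; exact hpW.mul_left 2
          have hpm : (p:ℤ) ∣ (m:ℤ) := by
            have h2 : (p:ℤ) ∣ (4*(m:ℤ))^y := by
              rw [← hprod]; exact hpT.mul_right T'
            have h3 : (p:ℤ) ∣ 4*(m:ℤ) := hpZ.dvd_of_dvd_pow h2
            rcases hpZ.dvd_mul.mp h3 with h4 | h4
            · exfalso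
              have h5 : (4:ℤ) = 2^2 := by norm_num
              have h6 : (p:ℤ) ∣ 2 := hpZ.dvd_of_dvd_pow (h5 ▸ h4)
              have h7 : (p:ℕ) ∣ 2 := by exact_mod_cast h6
              have := Nat.le_of_dvd (by norm_num) h7
              have := hp.two_le
              omega
            · exact h4
          have hpT' : ¬ (p:ℤ) ∣ T' := fun hd => hcp p hp hp2 hpT hd
          have hpy : (p:ℤ)^y ∣ T := by
            have h5 : (p:ℤ)^y ∣ T * T' := by
              rw [hprod]
              exact pow_dvd_pow_of_dvd (hpm.mul_left 4) y
            exact Prime.pow_dvd_of_dvd_mul_right hpZ y hpT' h5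
          have hp2T : (p:ℤ)^2 ∣ T := dvd_trans (pow_dvd_pow _ hy2) hpy
          have h8 := Int.modEq_iff_dvd.mp (hmodp p hp hp2 hpm)
          have h9 : (p:ℤ)^2 ∣ 2 := by
            have h10 := dvd_add h8 hp2T
            have h11 : T - 2 + 2 = T := by ring
            have h12 : (2:ℤ) - T + T = 2 := by ring
            rwa [h12] at h10
          have h13 : (p:ℕ)^2 ∣ 2 := by exact_mod_cast h9
          have h14 := Nat.le_of_dvd (by norm_num) h13
          have h15 : 3 ≤ p := by
            have := hp.two_le
            omega
          have h16 : 3^2 ≤ p^2 := Nat.pow_le_pow_left h15 2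
          omega
      have h2 := congrArg (fun n : ℕ => (n:ℤ)) h1
      simpa [Int.toNat_of_nonneg hWpos.le] using h2
    rw [hTW, hW1]; norm_num
  rcases Nat.even_or_odd X with hXe | hXo
  · -- Case X even : contradiction
    exfalso
    have hmod4V : V ≡ 2 [ZMOD 4] := by
      obtain ⟨hA4, hC4⟩ := key 4 ⟨m^2, by ring⟩
      calc V = c^Z + a^X := hV
        _ ≡ 1^Z + (-1)^X [ZMOD 4] := (hC4.pow Z).add (hA4.pow X)
        _ = 2 := by rw [hXe.neg_one_pow, one_pow]; norm_num
    have hmodpV : ∀ p:ℕ, p.Prime → p ≠ 2 → (p:ℤ) ∣ (m:ℤ) → V ≡ 2 [ZMOD (p:ℤ)^2] := by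
      intro p hp hp2 hpm
      have hq : (p:ℤ)^2 ∣ 4*(m:ℤ)^2 := (pow_dvd_pow_of_dvd hpm 2).mul_left 4
      obtain ⟨hA, hC⟩ := key _ hq
      calc V = c^Z + a^X := hV
        _ ≡ 1^Z + (-1)^X [ZMOD (p:ℤ)^2] := (hC.pow Z).add (hA.pow X)
        _ = 2 := by rw [hXe.neg_one_pow, one_pow]; norm_num
    have hV2 : V = 2 := killer V U hVpos (by rw [mul_comm]; exact hUV)
      (fun p hp h2 h3 h4 => hcop p hp h2 h4 h3) hmod4V hmodpV
    have h1 : c ≤ c^Z := le_self_pow₀ (by linarith) hZpos.ne'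
    have h2 : (1:ℤ) ≤ a^X := haXpos
    rw [hV] at hV2
    linarith
  · -- Case X odd
    have hmod4U : U ≡ 2 [ZMOD 4] := by
      obtain ⟨hA4, hC4⟩ := key 4 ⟨m^2, by ring⟩
      calc U = c^Z - a^X := hU
        _ ≡ 1^Z - (-1)^X [ZMOD 4] := (hC4.pow Z).sub (hA4.pow X)
        _ = 2 := by rw [hXo.neg_one_pow, one_pow]; norm_num
    have hmodpU : ∀ p:ℕ, p.Prime → p ≠ 2 → (p:ℤ) ∣ (m:ℤ) → U ≡ 2 [ZMOD (p:ℤ)^2] := by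
      intro p hp hp2 hpm
      have hq : (p:ℤ)^2 ∣ 4*(m:ℤ)^2 := (pow_dvd_pow_of_dvd hpm 2).mul_left 4
      obtain ⟨hA, hC⟩ := key _ hq
      calc U = c^Z - a^X := hU
        _ ≡ 1^Z - (-1)^X [ZMOD (p:ℤ)^2] := (hC.pow Z).sub (hA.pow X)
        _ = 2 := by rw [hXo.neg_one_pow, one_pow]; norm_num
    have hU2 : U = 2 := killer U V hUpos hUV hcop hmod4U hmodpU
    have hcZa : c^Z = a^X + 2 := by
      rw [hU] at hU2; linarith
    have hby : (4*(m:ℤ))^y = 4*(a^X + 1) := by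
      rw [← hUV, hU2, hV, hcZa]; ring
    obtain ⟨t, ht⟩ := hXo
    obtain ⟨S, hS1, hS2⟩ := geomS a ⟨2*(m:ℤ)^2 - 1, by rw [ha]; ring⟩ t
    have htX : 2*t+1 = X := by omega
    rw [htX] at hS1
    have h16 : (16*(m:ℤ)^2) * S = (16*(m:ℤ)^2) * (4*m)^(y-2) := by
      have e1 : (4*(m:ℤ))^y = (16*(m:ℤ)^2) * (4*m)^(y-2) := by
        have e0 : (4*(m:ℤ))^y = (4*m)^2 * (4*m)^(y-2) := by
          rw [← pow_add]; congr 1; omega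
        rw [e0]; ring
      have e2 : (4:ℤ)*(a+1) = 16*(m:ℤ)^2 := by rw [ha]; ring
      calc 16*(m:ℤ)^2 * S = 4*((a+1)*S) := by rw [← e2]; ring
        _ = 4*(a^X+1) := by rw [hS1]
        _ = (4*(m:ℤ))^y := hby.symm
        _ = _ := e1
    have hSeq : S = (4*(m:ℤ))^(y-2) := mul_left_cancel₀ (by positivity) h16
    have hy2' : y = 2 := by
      by_contra hne
      have hd2 : (2:ℤ) ∣ S := by
        rw [hSeq]
        have h2d : (2:ℤ) ∣ 4*(m:ℤ) := ⟨2*(m:ℤ), by ring⟩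
        exact dvd_pow h2d (by omega)
      obtain ⟨j, hj⟩ := hd2
      obtain ⟨i, hi⟩ := hS2
      omega
    have hS1' : S = 1 := by rw [hSeq, hy2']; norm_num
    rw [hS1', mul_one] at hS1
    have haX : a^X = a := by linarith
    have hX1 : X = 1 := by
      by_contra hne
      have h3 : 2 ≤ X := by omega
      have h4 : a^2 ≤ a^X := pow_le_pow_right₀ (by linarith) h3
      nlinarith
    have hZ1 : Z = 1 := by
      have hca : c = a + 2 := by rw [ha, hc]; ring
      have hcZ : c^Z = c := by rw [hcZa, haX, hca]
      by_contra hne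
      have h3 : 2 ≤ Z := by omega
      have h4 : c^2 ≤ c^Z := pow_le_pow_right₀ (by linarith) h3
      nlinarith
    exact ⟨by omega, hy2', by omega⟩
end

section
/- Let a, b, c be positive integers with a² + b² = c². If positive integers x, y, z satisfy a^x + b^y = c^z and z ≥ max(x, y), then (x,y,z) = (2,2,2). -/
/-!
For a Pythagorean triple and `n ≥ 3` one has `(aⁿ + bⁿ)² < (a² + b²)ⁿ = c²ⁿ`, so `aⁿ + bⁿ < cⁿ`.
Since `x, y ≤ z`, this rules out `z ≥ 3`. For `z = 1` the triangle inequality `c < a + b` rules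
out `a + b = c`; for `z = 2` both legs are at least `2`, so `aˣ + bʸ = a² + b²` with `x, y ≤ 2`
forces `x = y = 2`.
-/

section OrderedRing

variable {R : Type*} [CommRing R] [LinearOrder R] [IsStrictOrderedRing R]

-- Cauchy–Schwarz for `(a, b)` and `(aⁿ, bⁿ)`, then `a²ⁿ + b²ⁿ ≤ (aⁿ + bⁿ)²`.
theorem sq_pow_add_pow_succ_le {a b : R} (ha : 0 ≤ a) (hb : 0 ≤ b) (n : ℕ) :
    (a ^ (n + 1) + b ^ (n + 1)) ^ 2 ≤ (a ^ 2 + b ^ 2) * (a ^ n + b ^ n) ^ 2 := by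
  have hab : 0 ≤ a ^ n * b ^ n := by positivity
  rw [pow_succ a n, pow_succ b n]
  nlinarith [sq_nonneg (b * a ^ n - a * b ^ n), mul_nonneg hab (add_nonneg (sq_nonneg a) (sq_nonneg b))]

theorem sq_pow_add_pow_lt_sq_add_sq_pow {a b : R} (ha : 0 < a) (hb : 0 < b) {n : ℕ} (hn : 3 ≤ n) :
    (a ^ n + b ^ n) ^ 2 < (a ^ 2 + b ^ 2) ^ n := by
  induction n, hn using Nat.le_induction with
  | base =>
    nlinarith [sq_nonneg (a - b), mul_pos (mul_pos ha hb) (mul_pos ha hb), mul_pos ha hb]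
  | succ n _ ih =>
    calc (a ^ (n + 1) + b ^ (n + 1)) ^ 2 ≤ (a ^ 2 + b ^ 2) * (a ^ n + b ^ n) ^ 2 :=
          sq_pow_add_pow_succ_le ha.le hb.le n
      _ < (a ^ 2 + b ^ 2) * (a ^ 2 + b ^ 2) ^ n := mul_lt_mul_of_pos_left ih (by positivity)
      _ = (a ^ 2 + b ^ 2) ^ (n + 1) := (pow_succ' _ n).symm

theorem pow_add_pow_lt_pow_of_sq_add_sq_eq {a b c : R} (ha : 0 < a) (hb : 0 < b) (hc : 0 ≤ c)
    (h : a ^ 2 + b ^ 2 = c ^ 2) {n : ℕ} (hn : 3 ≤ n) : a ^ n + b ^ n < c ^ n := by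
  have key := sq_pow_add_pow_lt_sq_add_sq_pow ha hb hn
  rw [h, ← pow_mul, mul_comm, pow_mul] at key
  exact lt_of_pow_lt_pow_left₀ 2 (by positivity) key

theorem lt_add_of_sq_add_sq_eq {a b c : R} (ha : 0 < a) (hb : 0 < b) (h : a ^ 2 + b ^ 2 = c ^ 2) :
    c < a + b :=
  abs_lt_of_sq_lt_sq' (by nlinarith [mul_pos ha hb]) (by positivity) |>.2

end OrderedRing

theorem Nat.two_le_of_sq_add_sq_eq {a b c : ℕ} (ha : 0 < a) (hb : 0 < b)
    (h : a ^ 2 + b ^ 2 = c ^ 2) : 2 ≤ a := by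
  by_contra! ha2
  obtain rfl : a = 1 := by omega
  have hbc : b < c := lt_of_pow_lt_pow_left₀ 2 (Nat.zero_le c) (by omega)
  nlinarith [Nat.pow_le_pow_left hbc 2]

theorem stmt1_general (a b c x y z : ℕ) (ha : 0 < a) (hb : 0 < b)
    (hx : 0 < x) (hy : 0 < y)
    (hpyth : a ^ 2 + b ^ 2 = c ^ 2) (h : a ^ x + b ^ y = c ^ z)
    (hmax : z ≥ max x y) : x = 2 ∧ y = 2 ∧ z = 2 := by
  have hxz : x ≤ z := le_of_max_le_left hmax
  have hyz : y ≤ z := le_of_max_le_right hmax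
  have hax : a ^ x ≤ a ^ z := Nat.pow_le_pow_right ha hxz
  have hby : b ^ y ≤ b ^ z := Nat.pow_le_pow_right hb hyz
  have hpythℤ : (a : ℤ) ^ 2 + (b : ℤ) ^ 2 = (c : ℤ) ^ 2 := by exact_mod_cast hpyth
  have hz2 : z ≤ 2 := by
    by_contra! hz3
    have hlt : a ^ z + b ^ z < c ^ z := by
      exact_mod_cast pow_add_pow_lt_pow_of_sq_add_sq_eq (by positivity) (by positivity)
        (by positivity) hpythℤ hz3
    omega
  obtain rfl | rfl : z = 1 ∨ z = 2 := by omega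
  · obtain ⟨rfl, rfl⟩ : x = 1 ∧ y = 1 := by omega
    simp only [pow_one] at h
    have hlt : (c : ℤ) < a + b := lt_add_of_sq_add_sq_eq (by positivity) (by positivity) hpythℤ
    omega
  · have ha2 := Nat.two_le_of_sq_add_sq_eq ha hb hpyth
    have hb2 := Nat.two_le_of_sq_add_sq_eq hb ha (by rw [add_comm, hpyth])
    have hax2 : a ^ x = a ^ 2 := by omega
    have hby2 : b ^ y = b ^ 2 := by omega
    exact ⟨Nat.pow_right_injective ha2 hax2, Nat.pow_right_injective hb2 hby2, rfl⟩

theorem stmt1 (a b c x y z : ℕ) (ha : 0 < a) (hb : 0 < b) (hc : 0 < c)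
    (hx : 0 < x) (hy : 0 < y) (hz : 0 < z)
    (hpyth : a ^ 2 + b ^ 2 = c ^ 2) (h : a ^ x + b ^ y = c ^ z)
    (hmax : z ≥ max x y) : x = 2 ∧ y = 2 ∧ z = 2 :=
  stmt1_general a b c x y z ha hb hx hy hpyth h hmax
end

section
/- Let k ≥ 1, F_k = 2^(2^k) + 1. There are no positive integers x, y, z, n with n ≥ 2, y < z < x, and ((F_k − 2)n)^x + (2^{2^{k−1}+1} n)^y = (F_k n)^z. -/
private lemma sq_lt_three_pow (n : ℕ) : n * n < 3 ^ n := by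
  induction n with
  | zero => norm_num
  | succ n ih =>
    have h3 : 3 ^ (n + 1) = 3 * 3 ^ n := by ring
    nlinarith [ih]

private lemma mersenne_dvd {N z : ℕ} (hN : 0 < N) (h : 2 ^ N - 1 ∣ 2 ^ z - 1) : N ∣ z := by
  have hz : z = N * (z / N) + z % N := (Nat.div_add_mod z N).symm
  have hr : z % N < N := Nat.mod_lt _ hN
  set q := z / N
  set r := z % N
  have h1 : 1 ≤ (2 : ℕ) ^ (N * q) := Nat.one_le_two_pow
  have h2 : 1 ≤ (2 : ℕ) ^ r := Nat.one_le_two_pow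
  have h3 : 1 ≤ (2 : ℕ) ^ (N * q) * 2 ^ r := Nat.mul_le_mul h1 h2
  have key : 2 ^ z - 1 = (2 ^ (N * q) - 1) * 2 ^ r + (2 ^ r - 1) := by
    rw [hz, pow_add]
    zify [h1, h2, h3]
    ring
  have hd : 2 ^ N - 1 ∣ 2 ^ (N * q) - 1 := by
    have := Nat.sub_dvd_pow_sub_pow (2 ^ N) 1 q
    simpa [← pow_mul] using this
  have hdr : 2 ^ N - 1 ∣ 2 ^ r - 1 := by
    have := (Nat.dvd_add_right (hd.mul_right (2 ^ r))).mp (key ▸ h)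
    exact this
  have hlt : 2 ^ r - 1 < 2 ^ N - 1 := by
    have : (2 : ℕ) ^ r < 2 ^ N := Nat.pow_lt_pow_right one_lt_two hr
    omega
  have h0 : 2 ^ r - 1 = 0 := Nat.eq_zero_of_dvd_of_lt hdr hlt
  have hr0 : r = 0 := by
    have := Nat.one_le_two_pow (n := r)
    have h21 : (2:ℕ) ^ r = 1 := by omega
    by_contra hr0
    have : (2:ℕ) ^ 1 ≤ 2 ^ r := Nat.pow_le_pow_right (by norm_num) (by omega)
    simp at this; omega
  exact ⟨q, by omega⟩


private lemma no_reduced (k x z s : ℕ) (hk : 1 ≤ k) (hz : 0 < z) (hzx : z < x)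
    (hkey : (2 ^ 2 ^ k + 1) ^ z = (2 ^ 2 ^ k - 1) ^ x * 2 ^ s + 1) : False := by
  haveI : Fact (Nat.Prime 3) := ⟨by norm_num⟩
  set N := 2 ^ k with hN
  have hN2 : 2 ≤ N := by
    calc 2 = 2 ^ 1 := rfl
    _ ≤ 2 ^ k := Nat.pow_le_pow_right (by norm_num) hk
  have hNeven : 2 ∣ N := dvd_pow_self 2 (by omega)
  have h4 : 4 ≤ 2 ^ N := by
    calc 4 = 2 ^ 2 := rfl
    _ ≤ 2 ^ N := Nat.pow_le_pow_right (by norm_num) hN2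
  set a := 2 ^ N - 1 with ha
  set c := 2 ^ N + 1 with hc
  have hc5 : 5 ≤ c := by omega
  have hx : 0 < x := lt_trans hz hzx
  -- 3 ∣ a
  have h3a : 3 ∣ a := by
    have hNe : N = 2 * 2 ^ (k - 1) := by
      rw [hN, ← pow_succ']
      congr 1
      omega
    have hpow : (2 : ℕ) ^ N = 4 ^ 2 ^ (k - 1) := by
      rw [hNe, pow_mul]
      norm_num
    have := Nat.sub_dvd_pow_sub_pow 4 1 (2 ^ (k - 1))
    simpa [ha, hpow] using this
  -- c^z - 1 facts
  have hczsub : c ^ z - 1 = a ^ x * 2 ^ s := by omega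
  have h2zc : 2 ^ z ≤ c ^ z := Nat.pow_le_pow_left (by omega) z
  have h12z : 1 ≤ (2:ℕ) ^ z := Nat.one_le_two_pow
  -- N ∣ z
  have hdvd1 : a ∣ c ^ z - 1 := by
    rw [hczsub]
    exact ((dvd_pow_self a hx.ne').mul_right _)
  have hdvd2 : a ∣ c ^ z - 2 ^ z := by
    have := Nat.sub_dvd_pow_sub_pow c 2 z
    simpa [show c - 2 = a from by omega] using this
  have hdvd3 : a ∣ 2 ^ z - 1 := by
    have h := Nat.dvd_sub hdvd1 hdvd2
    rwa [show (c ^ z - 1) - (c ^ z - 2 ^ z) = 2 ^ z - 1 from by omega] at h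
  have hNz : N ∣ z := mersenne_dvd (by omega) hdvd3
  have hzN : N ≤ z := Nat.le_of_dvd hz hNz
  have hzeven : 2 ∣ z := hNeven.trans hNz
  obtain ⟨m, hm⟩ := hzeven
  have hm0 : m ≠ 0 := by omega
  -- 3 and c
  have h3c : ¬ 3 ∣ c := by
    intro h
    have h2 : (3:ℕ) ∣ 2 := by
      have := Nat.dvd_sub h h3a
      simpa [show c - a = 2 from by omega] using this
    omega
  have h3c2 : ¬ 3 ∣ c ^ 2 := fun h => h3c ((Nat.prime_three).dvd_of_dvd_pow h)
  have hfac2 : c ^ 2 - 1 = (c + 1) * (c - 1) := by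
    have h1 : 1 ≤ c := by omega
    have h2 : 1 ≤ c ^ 2 := Nat.one_le_pow _ _ (by omega)
    zify [h1, h2]
    ring
  have h3c1 : 3 ∣ c + 1 := by
    have : c + 1 = a + 3 := by omega
    rw [this]
    exact Nat.dvd_add h3a dvd_rfl
  have h3cc : 3 ∣ c ^ 2 - 1 := by
    rw [hfac2]; exact h3c1.mul_right _
  -- LTE main
  have hc2m : (c ^ 2) ^ m = c ^ z := by rw [← pow_mul, hm]
  have h1c2 : 1 < c ^ 2 := by nlinarith
  have hmain : padicValNat 3 (c ^ z - 1) = padicValNat 3 (c ^ 2 - 1) + padicValNat 3 m := by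
    have h := padicValNat.pow_sub_pow (p := 3) (x := c ^ 2) (y := 1)
      (⟨1, by norm_num⟩) h1c2 (by simpa using h3cc) h3c2 hm0
    simpa [hc2m] using h
  -- x ≤ v3(c^z - 1)
  have hne : c ^ z - 1 ≠ 0 := by
    have : 2 ≤ c ^ z := by calc 2 ≤ 2 ^ z := by
                                  calc (2:ℕ) = 2^1 := rfl
                                  _ ≤ 2 ^ z := Nat.pow_le_pow_right (by norm_num) hz
                            _ ≤ c ^ z := h2zc
    omega
  have hpowdvd : 3 ^ x ∣ c ^ z - 1 := by
    rw [hczsub]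
    exact (pow_dvd_pow_of_dvd h3a x).mul_right _
  have hx_le : x ≤ padicValNat 3 (c ^ z - 1) := by
    have h := (Nat.Prime.pow_dvd_iff_le_factorization Nat.prime_three hne).mp hpowdvd
    rwa [Nat.factorization_def _ Nat.prime_three] at h
  -- compute v3(c^2-1)
  set q := N - 1 with hq
  have hqodd : Odd q := by
    rw [Nat.odd_iff]; omega
  have hc1eq : c + 1 = 2 * (2 ^ q + 1) := by
    have : (2:ℕ) ^ N = 2 * 2 ^ q := by
      rw [show N = q + 1 from by omega]; ring
    omega
  have hlte2 : padicValNat 3 (2 ^ q + 1) = 1 + padicValNat 3 q := by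
    have h := padicValNat.pow_add_pow (p := 3) (x := 2) (y := 1)
      (⟨1, by norm_num⟩) (by norm_num) (by norm_num) hqodd
    simpa [padicValNat.self (by norm_num : 1 < 3)] using h
  have hvc1 : padicValNat 3 (c + 1) = 1 + padicValNat 3 q := by
    rw [hc1eq, padicValNat.mul (by norm_num) (by positivity),
      padicValNat.eq_zero_of_not_dvd (by norm_num), hlte2]
    omega
  have hvcm1 : padicValNat 3 (c - 1) = 0 := by
    apply padicValNat.eq_zero_of_not_dvd
    intro h
    have : (3:ℕ) ∣ 2 := (Nat.prime_three).dvd_of_dvd_pow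
      (by simpa [show c - 1 = 2 ^ N from by omega] using h)
    omega
  have hbeta : padicValNat 3 (c ^ 2 - 1) = 1 + padicValNat 3 q := by
    rw [hfac2, padicValNat.mul (by omega) (by omega), hvc1, hvcm1, add_zero]
  -- final contradiction
  have hqz : q < z := by omega
  have hmz : m ≤ z := by omega
  have hb1 : 3 ^ padicValNat 3 q ≤ q := Nat.le_of_dvd (by omega) pow_padicValNat_dvd
  have hb2 : 3 ^ padicValNat 3 m ≤ m := Nat.le_of_dvd (by omega) pow_padicValNat_dvd
  have hxle : x ≤ 1 + padicValNat 3 q + padicValNat 3 m := by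
    rw [hmain, hbeta] at hx_le; omega
  have hzle : z ≤ padicValNat 3 q + padicValNat 3 m := by omega
  have hfin : 3 ^ z ≤ z * z := by
    calc 3 ^ z ≤ 3 ^ (padicValNat 3 q + padicValNat 3 m) :=
          Nat.pow_le_pow_right (by norm_num) hzle
    _ = 3 ^ padicValNat 3 q * 3 ^ padicValNat 3 m := pow_add 3 _ _
    _ ≤ q * m := Nat.mul_le_mul hb1 hb2
    _ ≤ z * z := Nat.mul_le_mul (by omega) hmz
  exact absurd hfin (not_le.mpr (sq_lt_three_pow z))

theorem stmt9 (k : ℕ) (hk : 1 ≤ k) :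
    ¬ ∃ x y z n : ℕ, 0 < x ∧ 0 < y ∧ 0 < z ∧ 2 ≤ n ∧ y < z ∧ z < x ∧
      ((2 ^ 2 ^ k + 1 - 2) * n) ^ x + (2 ^ (2 ^ (k - 1) + 1) * n) ^ y
        = ((2 ^ 2 ^ k + 1) * n) ^ z := by
  rintro ⟨x, y, z, n, hx, hy, hz, hn, hyz, hzx, heq⟩
  set N := 2 ^ k with hN
  have hN2 : 2 ≤ N := by
    calc 2 = 2 ^ 1 := rfl
    _ ≤ 2 ^ k := Nat.pow_le_pow_right (by norm_num) hk
  have h4 : 4 ≤ 2 ^ N := by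
    calc 4 = 2 ^ 2 := rfl
    _ ≤ 2 ^ N := Nat.pow_le_pow_right (by norm_num) hN2
  set e := 2 ^ (k - 1) + 1 with he
  set a := 2 ^ N - 1 with ha
  set c := 2 ^ N + 1 with hc
  rw [show 2 ^ N + 1 - 2 = a from by omega] at heq
  have heq' : a ^ x * n ^ x + 2 ^ (e * y) * n ^ y = c ^ z * n ^ z := by
    simpa [mul_pow, ← pow_mul] using heq
  -- n is a power of two
  have d1 : n ^ (y + 1) ∣ a ^ x * n ^ x := Dvd.dvd.mul_left (pow_dvd_pow n (by omega)) _
  have d2 : n ^ (y + 1) ∣ c ^ z * n ^ z := Dvd.dvd.mul_left (pow_dvd_pow n (by omega)) _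
  have d3 : n ^ (y + 1) ∣ 2 ^ (e * y) * n ^ y := by
    have h := Nat.dvd_sub d2 d1
    rwa [show c ^ z * n ^ z - a ^ x * n ^ x = 2 ^ (e * y) * n ^ y from by omega] at h
  have hndvd : n ∣ 2 ^ (e * y) := by
    have h : n ^ y * n ∣ n ^ y * 2 ^ (e * y) := by
      rw [← pow_succ]
      rwa [mul_comm] at d3
    exact (Nat.mul_dvd_mul_iff_left (pow_pos (by omega : 0 < n) y)).mp h
  obtain ⟨t, htle, hnt⟩ := (Nat.dvd_prime_pow Nat.prime_two).mp hndvd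
  have ht1 : 1 ≤ t := by
    rcases Nat.eq_zero_or_pos t with h | h
    · rw [h] at hnt; simp at hnt; omega
    · exact h
  subst hnt
  have heq2 : a ^ x * 2 ^ (t * x) + 2 ^ (e * y + t * y) = c ^ z * 2 ^ (t * z) := by
    have h := heq'
    rw [← pow_mul, ← pow_mul, ← pow_mul, ← pow_add] at h
    exact h
  set u := e * y + t * y with hu_def
  set A := t * x with hA_def
  set C := t * z with hC_def
  have hCA : C < A := by
    rw [hA_def, hC_def]
    exact Nat.mul_lt_mul_of_pos_left hzx (by omega)
  rcases lt_trichotomy u C with hu | hu | hu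
  · -- u < C : impossible
    have hd1 : 2 ^ (u + 1) ∣ a ^ x * 2 ^ A := Dvd.dvd.mul_left (pow_dvd_pow 2 (by omega)) _
    have hd2 : 2 ^ (u + 1) ∣ c ^ z * 2 ^ C := Dvd.dvd.mul_left (pow_dvd_pow 2 (by omega)) _
    have hd3 : 2 ^ (u + 1) ∣ 2 ^ u := by
      have h := Nat.dvd_sub hd2 hd1
      rwa [show c ^ z * 2 ^ C - a ^ x * 2 ^ A = 2 ^ u from by omega] at h
    have hle := Nat.le_of_dvd (pow_pos (by norm_num) u) hd3
    have hlt : (2 : ℕ) ^ u < 2 ^ (u + 1) := Nat.pow_lt_pow_right one_lt_two (by omega)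
    omega
  · -- u = C : reduce and conclude
    rw [hu] at heq2
    have hACC : A - C + C = A := by omega
    have hmul : (a ^ x * 2 ^ (A - C) + 1) * 2 ^ C = c ^ z * 2 ^ C := by
      rw [add_mul, one_mul, mul_assoc, ← pow_add, hACC]
      exact heq2
    have hkey : c ^ z = a ^ x * 2 ^ (A - C) + 1 :=
      (Nat.eq_of_mul_eq_mul_right (pow_pos (by norm_num) C) hmul).symm
    exact no_reduced k x z (A - C) hk hz hzx hkey
  · -- C < u : impossible by parity
    have hd1 : 2 ^ (C + 1) ∣ a ^ x * 2 ^ A := Dvd.dvd.mul_left (pow_dvd_pow 2 (by omega)) _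
    have hd2 : 2 ^ (C + 1) ∣ 2 ^ u := pow_dvd_pow 2 (by omega)
    have hd3 : 2 ^ (C + 1) ∣ c ^ z * 2 ^ C := by
      rw [← heq2]
      exact Nat.dvd_add hd1 hd2
    have h2cz : 2 ∣ c ^ z := by
      have h : 2 ^ C * 2 ∣ 2 ^ C * c ^ z := by
        rw [← pow_succ]
        rwa [mul_comm] at hd3
      exact (Nat.mul_dvd_mul_iff_left (pow_pos (by norm_num : (0:ℕ) < 2) C)).mp h
    have h2c : 2 ∣ c := Nat.Prime.dvd_of_dvd_pow Nat.prime_two h2cz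
    have h2N : 2 ∣ 2 ^ N := dvd_pow_self 2 (by omega)
    omega
end

section
/- Let k ≥ 1 and suppose positive integers x, y, z, n satisfy ((F_k − 2)n)^x + (2^{2^{k−1}+1} n)^y = (F_k n)^z with y < z < x. Then n is a power of 2, say n = 2^r with r ≥ 1, and F_k^z − (F_k − 2)^x · 2^{r(x−z)} = 1. -/
lemma binom_mod (a : ℤ) : ∀ t : ℕ, (1 + a) ^ t ≡ 1 + t * a [ZMOD a ^ 2] := by
  intro t
  induction t with
  | zero => simp
  | succ t ih =>
    have h1 : (1 + a) ^ (t + 1) = (1 + a) ^ t * (1 + a) := by ring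
    rw [h1]
    refine (ih.mul_right _).trans ?_
    have : ((1 : ℤ) + (t + 1) * a) - (1 + t * a) * (1 + a) = a ^ 2 * (-t) := by push_cast; ring
    exact (Int.modEq_iff_dvd.mpr ⟨-t, this⟩)

lemma pow_two_pow_one {F j c : ℕ} (hF : 5 ≤ F) (hF4 : F % 4 = 1) (hj : 1 ≤ j)
    (h : F ^ j = 2 ^ c + 1) : j = 1 := by
  by_contra hne
  have hj2 : 2 ≤ j := by omega
  rcases Nat.even_or_odd j with he | ho
  · obtain ⟨t, ht⟩ := he
    have htpos : 1 ≤ t := by omega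
    set R := F ^ t with hR
    have hR5 : 5 ≤ R := le_trans hF (Nat.le_self_pow (by omega) F)
    have hR4 : R % 4 = 1 := by rw [hR, Nat.pow_mod, hF4]; simp
    have hsq : R ^ 2 = 2 ^ c + 1 := by
      rw [hR, ← pow_mul]; rw [show t * 2 = j by omega]; exact h
    have h1 : R ^ 2 = (R - 1) * (R + 1) + 1 := by
      obtain ⟨v, hv⟩ : ∃ v, R = v + 1 := ⟨R - 1, by omega⟩
      rw [hv]
      simp only [Nat.add_sub_cancel]
      ring
    have hfac : (R - 1) * (R + 1) = 2 ^ c := by omega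
    have hdvd : (R + 1) ∣ 2 ^ c := Dvd.intro_left _ hfac
    obtain ⟨e, he', hRe⟩ := (Nat.dvd_prime_pow Nat.prime_two).mp hdvd
    have hm : 2 ^ e % 4 = 2 := by rw [← hRe]; omega
    have he2 : e < 2 := by
      by_contra hge
      have h4 : (4 : ℕ) ∣ 2 ^ e := by
        have := pow_dvd_pow 2 (by omega : 2 ≤ e)
        simpa using this
      omega
    interval_cases e <;> omega
  · -- j odd, ≥ 3
    have hj3 : 3 ≤ j := by
      rcases ho with ⟨w, hw⟩; omega
    set S := ∑ i ∈ Finset.range j, F ^ i with hS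
    have hgeo : (S : ℤ) * ((F : ℤ) - 1) = (F : ℤ) ^ j - 1 := by
      rw [hS]; push_cast; exact geom_sum_mul _ _
    have hdvd : (S : ℤ) ∣ (2 : ℤ) ^ c := by
      refine ⟨(F : ℤ) - 1, ?_⟩
      have hc' : (F : ℤ) ^ j = 2 ^ c + 1 := by exact_mod_cast h
      rw [hgeo, hc']
      ring
    have hSd : S ∣ 2 ^ c := by exact_mod_cast hdvd
    have hSodd : S % 2 = 1 := by
      rw [hS, Finset.sum_nat_mod]
      have : ∀ i ∈ Finset.range j, F ^ i % 2 = 1 := by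
        intro i _
        rw [Nat.pow_mod, show F % 2 = 1 by omega]; simp
      rw [Finset.sum_congr rfl this]
      simp
      rcases ho with ⟨w, hw⟩; omega
    obtain ⟨e, he', hSe⟩ := (Nat.dvd_prime_pow Nat.prime_two).mp hSd
    have he0 : e = 0 := by
      by_contra h0
      have : (2 : ℕ) ∣ 2 ^ e := dvd_pow_self 2 h0
      omega
    have hS1 : S = 1 := by rw [hSe, he0]; rfl
    have hge : F ≤ S := by
      rw [hS]
      calc F = F ^ 1 := (pow_one F).symm
      _ ≤ ∑ i ∈ Finset.range j, F ^ i :=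
        Finset.single_le_sum (f := fun i => F ^ i) (fun i _ => Nat.zero_le _) (by simp; omega)
    omega


lemma case_n_one (k x y z : ℕ) (hk : 1 ≤ k) (hx : 0 < x) (hy : 0 < y)
    (hz : 0 < z) (hyz : y < z) (hzx : z < x)
    (E2 : (2 ^ 2 ^ k - 1) ^ x + 2 ^ ((2 ^ (k - 1) + 1) * y) = (2 ^ 2 ^ k + 1) ^ z) :
    False := by
  set A := 2 ^ 2 ^ k with hA
  set M := (2 ^ (k - 1) + 1) * y with hM
  have hkk : 2 * 2 ^ (k - 1) = 2 ^ k := by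
    rw [← pow_succ']
    congr 1
    omega
  have hA4 : 4 ∣ A := by
    rw [hA]
    have : (2:ℕ) ^ 2 ∣ 2 ^ 2 ^ k := pow_dvd_pow 2 (by
      calc 2 = 2 * 1 := rfl
      _ ≤ 2 * 2 ^ (k-1) := by have := Nat.one_le_two_pow (n := k - 1); omega
      _ = 2 ^ k := hkk)
    simpa using this
  have hAge : 4 ≤ A := Nat.le_of_dvd (by positivity) hA4
  have hM2 : 2 ≤ M := by
    have h1 : 1 ≤ 2 ^ (k - 1) := Nat.one_le_two_pow
    calc 2 = 2 * 1 := rfl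
    _ ≤ (2 ^ (k - 1) + 1) * y := Nat.mul_le_mul (by omega) hy
  -- (a) x is even
  have hxeven : Even x := by
    by_contra hodd
    rw [Nat.not_even_iff_odd] at hodd
    have hc := congrArg (Nat.cast : ℕ → ZMod 4) E2
    push_cast [Nat.cast_sub (by omega : 1 ≤ A)] at hc
    have hA0 : (A : ZMod 4) = 0 := (ZMod.natCast_eq_zero_iff A 4).mpr hA4
    have h2M : (2 : ZMod 4) ^ M = 0 := by
      rw [show M = 2 + (M - 2) by omega, pow_add, show (2 : ZMod 4) ^ 2 = 0 by decide, zero_mul]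
    rw [hA0, h2M] at hc
    simp at hc
    rw [hodd.neg_one_pow] at hc
    revert hc; decide
  -- (b) M and z have the same parity
  have hpar : (Even M ↔ Even z) := by
    have h3 : (3 : ℕ) ∣ A - 1 := by
      have h43 : A = 4 ^ 2 ^ (k - 1) := by
        rw [hA, show (4:ℕ) = 2 ^ 2 by rfl, ← pow_mul, hkk]
      rw [h43]
      have := Nat.sub_dvd_pow_sub_pow 4 1 (2 ^ (k - 1))
      simpa using this
    have hc := congrArg (Nat.cast : ℕ → ZMod 3) E2
    push_cast [Nat.cast_sub (by omega : 1 ≤ A)] at hc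
    have hA1 : ((A - 1 : ℕ) : ZMod 3) = 0 := (ZMod.natCast_eq_zero_iff _ 3).mpr h3
    rw [Nat.cast_sub (by omega : 1 ≤ A)] at hA1
    have hA1' : (A : ZMod 3) = 1 := by
      have := hA1; linear_combination this
    rw [hA1'] at hc
    simp only [sub_self] at hc
    rw [zero_pow (by omega : x ≠ 0), zero_add] at hc
    have h2 : (2 : ZMod 3) = -1 := by decide
    have h11 : (1 : ZMod 3) + 1 = -1 := by decide
    rw [h11, h2] at hc
    constructor
    · intro hMe
      by_contra hzo
      rw [Nat.not_even_iff_odd] at hzo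
      rw [hMe.neg_one_pow, hzo.neg_one_pow] at hc
      revert hc; decide
    · intro hze
      by_contra hMo
      rw [Nat.not_even_iff_odd] at hMo
      rw [hMo.neg_one_pow, hze.neg_one_pow] at hc
      revert hc; decide
  obtain ⟨t, ht⟩ := hA4
  have hF4 : (A + 1) % 4 = 1 := by omega
  rcases Nat.even_or_odd z with hze | hzo
  · -- z even
    obtain ⟨i, hi⟩ := hxeven
    obtain ⟨j, hj⟩ := hze
    have hi1 : 1 ≤ i := by omega
    have hj1 : 1 ≤ j := by omega
    set P := (A + 1) ^ j with hP
    set Q := (A - 1) ^ i with hQ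
    have hE : Q ^ 2 + 2 ^ M = P ^ 2 := by
      rw [hP, hQ, ← pow_mul, ← pow_mul, show i * 2 = x by omega, show j * 2 = z by omega]
      exact E2
    have hQ3 : 3 ≤ Q := le_trans (by omega) (Nat.le_self_pow (by omega) (A - 1))
    have hP5 : 5 ≤ P := le_trans (by omega) (Nat.le_self_pow (by omega) (A + 1))
    have hQP : Q < P := by
      by_contra hle
      push_neg at hle
      have := Nat.pow_le_pow_left hle 2
      have h2M : 0 < 2 ^ M := by positivity
      omega
    have hPodd : P % 2 = 1 := by
      rw [hP, Nat.pow_mod, show (A + 1) % 2 = 1 by omega]; simp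
    have hid : (P - Q) * (P + Q) + Q ^ 2 = P ^ 2 := by
      obtain ⟨d, hd⟩ : ∃ d, P = Q + d := ⟨P - Q, by omega⟩
      rw [hd]
      simp only [Nat.add_sub_cancel_left]
      ring
    have hds : (P - Q) * (P + Q) = 2 ^ M := by omega
    obtain ⟨a, _, ha⟩ := (Nat.dvd_prime_pow Nat.prime_two).mp (Dvd.intro _ hds)
    obtain ⟨b, _, hb⟩ := (Nat.dvd_prime_pow Nat.prime_two).mp (Dvd.intro_left _ hds)
    have hb3 : 3 ≤ b := by
      by_contra hble
      have : 2 ^ b ≤ 2 ^ 2 := Nat.pow_le_pow_right (by norm_num) (by omega)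
      omega
    have h4b : (4 : ℕ) ∣ 2 ^ b := by
      have := pow_dvd_pow 2 (by omega : 2 ≤ b)
      simpa using this
    have ha1 : a = 1 := by
      obtain ⟨t', ht'⟩ := h4b
      by_contra hane
      rcases Nat.lt_or_ge a 2 with h2 | h2
      · interval_cases a
        · omega
        · omega
      · have h4a : (4 : ℕ) ∣ 2 ^ a := by
          have := pow_dvd_pow 2 h2
          simpa using this
        obtain ⟨t'', ht''⟩ := h4a
        omega
    have ha' : P - Q = 2 := by rw [ha1] at ha; simpa using ha
    have hPQ2 : P = Q + 2 := by omega
    have hpow : 2 ^ b = 2 * 2 ^ (b - 1) := by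
      rw [← pow_succ']
      congr 1
      omega
    have hPeq : (A + 1) ^ j = 2 ^ (b - 1) + 1 := by rw [← hP]; omega
    have hj1' : j = 1 := pow_two_pow_one (by omega) hF4 hj1 hPeq
    have hPA : P = A + 1 := by rw [hP, hj1', pow_one]
    have hQA : Q = A - 1 := by omega
    have hi2 : 2 ≤ i := by omega
    have hgr : (A - 1) * (A - 1) ≤ Q := by
      calc (A - 1) * (A - 1) = (A - 1) ^ 2 := by ring
      _ ≤ (A - 1) ^ i := Nat.pow_le_pow_right (by omega) hi2
    have h3A : 3 * (A - 1) ≤ (A - 1) * (A - 1) := Nat.mul_le_mul_right _ (by omega)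
    omega
  · -- z odd
    have hModd : ¬ Even M := by
      intro hMe
      exact (Nat.not_even_iff_odd.mpr hzo) (hpar.mp hMe)
    obtain ⟨x', hx'⟩ := hxeven
    obtain ⟨w, hw⟩ := hzo
    have cE := congrArg (Nat.cast : ℕ → ℤ) E2
    push_cast [Nat.cast_sub (by omega : 1 ≤ A)] at cE
    have hdvdA2 : (2 * (A : ℤ)) ∣ (A : ℤ) ^ 2 := ⟨2 * t, by push_cast [ht]; ring⟩
    have hFz : ((A : ℤ) + 1) ^ z ≡ 1 + z * A [ZMOD 2 * A] := by
      have h1 := binom_mod (A : ℤ) z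
      have h2 := Int.ModEq.of_dvd hdvdA2 h1
      simpa [add_comm] using h2
    have hGx : ((A : ℤ) - 1) ^ x ≡ 1 [ZMOD 2 * A] := by
      have hsq : ((A : ℤ) - 1) ^ 2 ≡ 1 [ZMOD 2 * A] := by
        refine Int.modEq_iff_dvd.mpr ⟨-(2 * t - 1), ?_⟩
        push_cast [ht]; ring
      have hxx : ((A : ℤ) - 1) ^ x = (((A : ℤ) - 1) ^ 2) ^ x' := by
        rw [← pow_mul]; congr 1; omega
      rw [hxx]
      simpa using hsq.pow x'
    have hMA : (2 : ℤ) ^ M ≡ (A : ℤ) [ZMOD 2 * A] := by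
      have h1 : (2 : ℤ) ^ M = ((A : ℤ) + 1) ^ z - ((A : ℤ) - 1) ^ x := by linarith
      rw [h1]
      refine (hFz.sub hGx).trans ?_
      refine Int.modEq_iff_dvd.mpr ⟨-w, ?_⟩
      push_cast [hw]; ring
    rcases le_or_gt M (2 ^ k) with hle | hlt
    · have h2MA : 2 ^ M ≤ A := by
        rw [hA]; exact Nat.pow_le_pow_right (by norm_num) hle
      have hdvd2 : (2 * (A : ℤ)) ∣ ((A : ℤ) - 2 ^ M) := Int.ModEq.dvd hMA
      have hcast : ((2 * A : ℕ) : ℤ) ∣ (((A - 2 ^ M : ℕ)) : ℤ) := by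
        push_cast [Nat.cast_sub h2MA]
        exact hdvd2
      have hnat : (2 * A) ∣ (A - 2 ^ M) := Int.natCast_dvd_natCast.mp hcast
      have hsub := Nat.sub_le A (2 ^ M)
      have h0 : A - 2 ^ M = 0 := Nat.eq_zero_of_dvd_of_lt hnat (by omega)
      have hMeq : 2 ^ M = 2 ^ 2 ^ k := by rw [← hA]; omega
      have hM2k : M = 2 ^ k := Nat.pow_right_injective (le_refl 2) hMeq
      have : Even M := by
        rw [hM2k, ← hkk]
        exact ⟨2 ^ (k - 1), by ring⟩
      exact hModd this
    · have h2A : 2 * A = 2 ^ (2 ^ k + 1) := by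
        rw [hA, ← pow_succ']
      have hdvd2M : (2 * A : ℕ) ∣ 2 ^ M := by
        rw [h2A]
        exact pow_dvd_pow 2 (by omega)
      have hdvdA : (2 * (A : ℤ)) ∣ (A : ℤ) := by
        have h1 : (2 * (A : ℤ)) ∣ ((A : ℤ) - 2 ^ M) := Int.ModEq.dvd hMA
        have h2 : (2 * (A : ℤ)) ∣ (2 : ℤ) ^ M := by exact_mod_cast Int.natCast_dvd_natCast.mpr hdvd2M
        have := dvd_add h1 h2
        simpa using this
      have hnatA : (2 * A) ∣ A := by exact_mod_cast hdvdA
      have := Nat.le_of_dvd (by omega) hnatA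
      omega

theorem stmt10 (k x y z n : ℕ) (hk : 1 ≤ k) (hx : 0 < x) (hy : 0 < y)
    (hz : 0 < z) (hn : 0 < n) (hyz : y < z) (hzx : z < x)
    (h : ((2 ^ 2 ^ k + 1 - 2) * n) ^ x + (2 ^ (2 ^ (k - 1) + 1) * n) ^ y
        = ((2 ^ 2 ^ k + 1) * n) ^ z) :
    ∃ r : ℕ, 1 ≤ r ∧ n = 2 ^ r ∧
      (2 ^ 2 ^ k + 1) ^ z - (2 ^ 2 ^ k - 1) ^ x * 2 ^ (r * (x - z)) = 1 := by
  have hA2 : 2 ≤ 2 ^ 2 ^ k := by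
    calc (2:ℕ) = 2 ^ 1 := rfl
    _ ≤ 2 ^ 2 ^ k := Nat.pow_le_pow_right (by norm_num) Nat.one_le_two_pow
  have hsub : 2 ^ 2 ^ k + 1 - 2 = 2 ^ 2 ^ k - 1 := by omega
  rw [hsub] at h
  set A := 2 ^ 2 ^ k with hA
  set m := 2 ^ (k - 1) + 1 with hm
  simp only [mul_pow, ← pow_mul] at h
  -- h : (A-1)^x * n^x + 2^(m*y) * n^y = (A+1)^z * n^z
  have hny : 0 < n ^ y := pow_pos hn y
  have E1 : (A - 1) ^ x * n ^ (x - y) + 2 ^ (m * y) = (A + 1) ^ z * n ^ (z - y) := by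
    apply Nat.eq_of_mul_eq_mul_right hny
    calc ((A - 1) ^ x * n ^ (x - y) + 2 ^ (m * y)) * n ^ y
        = (A - 1) ^ x * n ^ (x - y + y) + 2 ^ (m * y) * n ^ y := by rw [pow_add]; ring
      _ = (A - 1) ^ x * n ^ x + 2 ^ (m * y) * n ^ y := by rw [show x - y + y = x by omega]
      _ = (A + 1) ^ z * n ^ z := h
      _ = (A + 1) ^ z * n ^ (z - y + y) := by rw [show z - y + y = z by omega]
      _ = (A + 1) ^ z * n ^ (z - y) * n ^ y := by rw [pow_add]; ring
  have hd1 : n ∣ (A - 1) ^ x * n ^ (x - y) :=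
    dvd_mul_of_dvd_right (dvd_pow_self n (by omega : x - y ≠ 0)) _
  have hd2 : n ∣ (A + 1) ^ z * n ^ (z - y) :=
    dvd_mul_of_dvd_right (dvd_pow_self n (by omega : z - y ≠ 0)) _
  have hdn : n ∣ 2 ^ (m * y) := (Nat.dvd_add_right hd1).mp (by rw [E1]; exact hd2)
  obtain ⟨r, hrle, hnr⟩ := (Nat.dvd_prime_pow Nat.prime_two).mp hdn
  by_cases hr : r = 0
  · exfalso
    subst hr
    rw [pow_zero] at hnr
    subst hnr
    simp only [one_pow, mul_one] at E1
    exact case_n_one k x y z hk hx hy hz hyz hzx E1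
  · have hr1 : 1 ≤ r := by omega
    subst hnr
    simp only [← pow_mul] at E1
    -- E1 : (A-1)^x * 2^(r*(x-y)) + 2^(m*y) = (A+1)^z * 2^(r*(z-y))
    have hdvd : 2 ^ (r * (z - y)) ∣ 2 ^ (m * y) := by
      have hd1' : 2 ^ (r * (z - y)) ∣ (A - 1) ^ x * 2 ^ (r * (x - y)) :=
        dvd_mul_of_dvd_right (pow_dvd_pow 2 (Nat.mul_le_mul_left r (by omega))) _
      have hd2' : 2 ^ (r * (z - y)) ∣ (A + 1) ^ z * 2 ^ (r * (z - y)) :=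
        dvd_mul_of_dvd_right dvd_rfl _
      exact (Nat.dvd_add_right hd1').mp (by rw [E1]; exact hd2')
    have hle : r * (z - y) ≤ m * y :=
      (Nat.pow_dvd_pow_iff_le_right (by norm_num : (1:ℕ) < 2)).mp hdvd
    set c := m * y - r * (z - y) with hc
    have E2 : (A + 1) ^ z = (A - 1) ^ x * 2 ^ (r * (x - z)) + 2 ^ c := by
      have hpos : 0 < 2 ^ (r * (z - y)) := by positivity
      apply Nat.eq_of_mul_eq_mul_right hpos
      have e1 : r * (x - z) + r * (z - y) = r * (x - y) := by
        rw [← Nat.mul_add]; congr 1; omega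
      have e2 : c + r * (z - y) = m * y := by omega
      calc (A + 1) ^ z * 2 ^ (r * (z - y))
          = (A - 1) ^ x * 2 ^ (r * (x - y)) + 2 ^ (m * y) := E1.symm
        _ = ((A - 1) ^ x * 2 ^ (r * (x - z)) + 2 ^ c) * 2 ^ (r * (z - y)) := by
            have e3 : (A - 1) ^ x * 2 ^ (r * (x - y))
                = (A - 1) ^ x * 2 ^ (r * (x - z)) * 2 ^ (r * (z - y)) := by
              rw [mul_assoc, ← pow_add, e1]
            have e4 : (2 : ℕ) ^ (m * y) = 2 ^ c * 2 ^ (r * (z - y)) := by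
              rw [← pow_add, e2]
            rw [e3, e4]
            ring
    have hAeven : 2 ∣ A := by
      rw [hA]; exact dvd_pow_self 2 (by positivity)
    have hLodd : (A + 1) ^ z % 2 = 1 := by
      rw [Nat.pow_mod, show (A + 1) % 2 = 1 by omega]; simp
    have hdvd2 : 2 ∣ (A - 1) ^ x * 2 ^ (r * (x - z)) :=
      dvd_mul_of_dvd_right (dvd_pow_self 2 (Nat.mul_ne_zero (by omega) (by omega))) _
    have hc0 : c = 0 := by
      by_contra hcne
      obtain ⟨u1, hu1⟩ := hdvd2
      obtain ⟨u2, hu2⟩ := dvd_pow_self 2 hcne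
      omega
    refine ⟨r, hr1, rfl, ?_⟩
    rw [hc0, pow_zero] at E2
    omega
end

section
/- Let k ≥ 1 and suppose positive integers x, y, z, n with n ≥ 2 satisfy ((F_k − 2)n)^x + (2^{2^{k−1}+1} n)^y = (F_k n)^z with x < z < y. Then n shares a common prime factor with F_k − 2 = ∏_{i=0}^{k−1} F_i. -/
/-- The two larger exponents force `n ^ (x + 1)` to divide `(A * n) ^ x`. -/
theorem Nat.dvd_pow_of_mul_pow_add_mul_pow_eq {A B C n x y z : ℕ} (hn : n ≠ 0)
    (hxy : x < y) (hxz : x < z) (h : (A * n) ^ x + (B * n) ^ y = (C * n) ^ z) :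
    n ∣ A ^ x := by
  have hB : n ^ (x + 1) ∣ (B * n) ^ y :=
    (pow_dvd_pow n hxy).trans (Dvd.intro_left _ (mul_pow B n y).symm)
  have hC : n ^ (x + 1) ∣ (C * n) ^ z :=
    (pow_dvd_pow n hxz).trans (Dvd.intro_left _ (mul_pow C n z).symm)
  have hA : n ^ x * n ∣ n ^ x * A ^ x := by
    rw [← pow_succ, mul_comm, ← mul_pow]
    exact (Nat.dvd_add_left hB).mp (h ▸ hC)
  exact Nat.dvd_of_mul_dvd_mul_left (pow_pos (Nat.pos_of_ne_zero hn) x) hA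

theorem Nat.exists_prime_dvd_of_dvd_pow {n A x : ℕ} (hn : n ≠ 1) (h : n ∣ A ^ x) :
    ∃ p : ℕ, p.Prime ∧ p ∣ n ∧ p ∣ A :=
  ⟨n.minFac, Nat.minFac_prime hn, Nat.minFac_dvd n,
    (Nat.minFac_prime hn).dvd_of_dvd_pow ((Nat.minFac_dvd n).trans h)⟩

theorem stmt19_general (k n x y z : ℕ) (hn : 2 ≤ n)
    (hxz : x < z) (hzy : z < y)
    (h : ((2 ^ 2 ^ k + 1 - 2) * n) ^ x + (2 ^ (2 ^ (k - 1) + 1) * n) ^ y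
        = ((2 ^ 2 ^ k + 1) * n) ^ z) :
    ∃ p : ℕ, p.Prime ∧ p ∣ n ∧ p ∣ 2 ^ 2 ^ k - 1 := by
  have hF : 2 ^ 2 ^ k + 1 - 2 = 2 ^ 2 ^ k - 1 := by omega
  rw [hF] at h
  exact Nat.exists_prime_dvd_of_dvd_pow (by omega)
    (Nat.dvd_pow_of_mul_pow_add_mul_pow_eq (by omega) (hxz.trans hzy) hxz h)

theorem stmt19 (k n x y z : ℕ) (hk : 1 ≤ k) (hn : 2 ≤ n)
    (hx : 0 < x) (hy : 0 < y) (hz : 0 < z) (hxz : x < z) (hzy : z < y)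
    (h : ((2 ^ 2 ^ k + 1 - 2) * n) ^ x + (2 ^ (2 ^ (k - 1) + 1) * n) ^ y
        = ((2 ^ 2 ^ k + 1) * n) ^ z) :
    ∃ p : ℕ, p.Prime ∧ p ∣ n ∧ p ∣ 2 ^ 2 ^ k - 1 :=
  stmt19_general k n x y z hn hxz hzy h
end
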